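/- arXiv:2411.15317 — 10 statements merged into one kernel-verified Lean document; each statement's English description precedes it below -/
import Mathlib

section
/- Let X and Y be finite sets, u : X × Y → ℝ, and let γ be a probability distribution on X × Y with marginals ρ on X and φ on Y. If the support of γ is strictly u-cyclically monotone (i.e., for every finite collection of pairs (x_i, y_i), i = 1,…,N, in the support of γ such that the multiset {(x_i, y_i)} differs from {(x_i, y_{i+1})} (indices mod N), we have ∑_i u(x_i, y_i) > ∑_i u(x_i, y_{i+1})), then γ is the unique maximizer of ∫ u dγ' over all probability distributions γ' on X × Y with marginals ρ and φ. -/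
/-!
Write `δ = γ - γ'`: it has zero row and column sums and is positive only on the support of `γ`.
If `δ ≠ 0`, starting from a positive entry `(x, y)` one moves along its row to a negative entry
`(x, y')` and then along the column of `y'` to a positive entry `(x', y')`; in a finite table this
walk closes up into a cycle `(x i, y i) ↦ (x i, y (i + 1))` with positive corners on the support of
`γ`. Strict cyclic monotonicity says that this cycle strictly loses utility, so subtracting a small
multiple of it from `δ` gains a positive amount of `∑ u δ` while keeping the marginals zero and
shrinking the support of `δ`; induction on the size of the support gives `0 < ∑ u δ`.
-/

/-- γ is a probability distribution on a finite type. -/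
def IsDist {Z : Type*} [Fintype Z] (γ : Z → ℝ) : Prop :=
  (∀ z, 0 ≤ γ z) ∧ ∑ z, γ z = 1

/-- A set `S ⊆ X × Y` is strictly `u`-cyclically monotone: for any finite collection of
pairs in `S` whose multiset differs from the cyclically shifted one, the cyclic shift
strictly decreases total utility. -/
def StrictCycMono {X Y : Type*} (u : X → Y → ℝ) (S : Set (X × Y)) : Prop :=
  ∀ (N : ℕ) (x : Fin N → X) (y : Fin N → Y),
    (∀ i, (x i, y i) ∈ S) →
    ((List.ofFn fun i => (x i, y i)) : Multiset (X × Y)) ≠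
      ((List.ofFn fun i => (x i, y (finRotate N i))) : Multiset (X × Y)) →
    ∑ i, u (x i) (y (finRotate N i)) < ∑ i, u (x i) (y i)

open Finset Function

theorem Function.exists_iterate_mem_periodicPts {α : Type*} [Finite α] (f : α → α) (a : α) :
    ∃ m, f^[m] a ∈ periodicPts f := by
  obtain ⟨m, n, hmn, h⟩ := Finite.exists_ne_map_eq_of_infinite (fun n => f^[n] a)
  wlog hlt : m < n generalizing m n
  · exact this n m hmn.symm h.symm (by omega)
  refine ⟨m, n - m, by omega, ?_⟩
  simp only [IsPeriodicPt, IsFixedPt, ← iterate_add_apply, Nat.sub_add_cancel hlt.le]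
  exact h.symm

theorem exists_injective_cycle {α : Type*} [Finite α] [Nonempty α] {r : α → α → Prop}
    (h : ∀ a, ∃ b, r a b) :
    ∃ (N : ℕ) (a : Fin N → α), 0 < N ∧ Injective a ∧ ∀ i, r (a i) (a (finRotate N i)) := by
  choose f hf using h
  obtain ⟨m, hm⟩ := exists_iterate_mem_periodicPts f (Classical.arbitrary α)
  set z := f^[m] (Classical.arbitrary α)
  refine ⟨minimalPeriod f z, fun i => f^[i] z, minimalPeriod_pos_of_mem_periodicPts hm,
    fun i j hij => Fin.ext (iterate_injOn_Iio_minimalPeriod i.2 j.2 hij), fun i => ?_⟩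
  have : NeZero (minimalPeriod f z) := i.neZero
  have hrot : f^[(finRotate _ i : ℕ)] z = f (f^[i] z) := by
    rw [finRotate_apply, Fin.val_add, Fin.val_one', Nat.add_mod_mod, iterate_mod_minimalPeriod_eq,
      iterate_succ_apply']
  simpa only [hrot] using hf (f^[i] z)

theorem exists_pos_support_sub_smul_ssubset {Z : Type*} [Finite Z] {δ c : Z → ℝ}
    (hc : ∀ p, c p = 0 ∨ (c p = 1 ∧ 0 < δ p) ∨ (c p = -1 ∧ δ p < 0)) (hc0 : c ≠ 0) :
    ∃ ε : ℝ, 0 < ε ∧ (∀ p, 0 < (δ - ε • c) p → 0 < δ p) ∧ support (δ - ε • c) ⊂ support δ := by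
  have : Fintype Z := Fintype.ofFinite Z
  classical
  set s := univ.filter fun p => c p ≠ 0
  have hs : s.Nonempty := by
    obtain ⟨p, hp⟩ := Function.ne_iff.mp hc0
    exact ⟨p, by simpa [s] using hp⟩
  have hδs : ∀ p ∈ s, 0 < |δ p| := fun p hp => by
    rcases hc p with h | ⟨-, h⟩ | ⟨-, h⟩
    · simp [s, h] at hp
    · exact abs_pos.2 h.ne'
    · exact abs_pos.2 h.ne
  -- `ε` is the least `|δ|` on the support of `c`, so subtracting `ε • c` cancels an entry of `δ`
  obtain ⟨p₀, hp₀, hε⟩ := exists_mem_eq_inf' hs fun p => |δ p|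
  set ε := s.inf' hs fun p => |δ p|
  have hεle : ∀ p, c p ≠ 0 → ε ≤ |δ p| := fun p hp => inf'_le _ (by simpa [s] using hp)
  have hδ' : ∀ p, (δ - ε • c) p = δ p ∨ (0 ≤ (δ - ε • c) p ∧ 0 < δ p) ∨
      ((δ - ε • c) p ≤ 0 ∧ δ p < 0) := fun p => by
    rcases hc p with h | ⟨h, hp⟩ | ⟨h, hp⟩
    · simp [h]
    · simp only [Pi.sub_apply, Pi.smul_apply, smul_eq_mul, h]
      have := hεle p (by simp [h])
      rw [abs_of_pos hp] at this
      right; left; constructor <;> linarith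
    · simp only [Pi.sub_apply, Pi.smul_apply, smul_eq_mul, h]
      have := hεle p (by simp [h])
      rw [abs_of_neg hp] at this
      right; right; constructor <;> linarith
  refine ⟨ε, (lt_inf'_iff hs).2 hδs, fun p hp => ?_, ?_⟩
  · rcases hδ' p with h | h | h
    · rwa [← h]
    · exact h.2
    · linarith [h.1]
  refine (Set.ssubset_iff_of_subset fun p hp => ?_).2 ⟨p₀, ?_, ?_⟩
  · rcases hδ' p with h | h | h
    · rwa [mem_support, ← h]
    · exact h.2.ne'
    · exact h.2.ne
  · exact (abs_pos.1 (hδs p₀ hp₀))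
  · rw [notMem_support]
    rcases hc p₀ with h | ⟨h, hp⟩ | ⟨h, hp⟩
    · simp [s, h] at hp₀
    · simp [h, hε, abs_of_pos hp]
    · simp [h, hε, abs_of_neg hp]

section Marginals

variable {X Y : Type*}

section SignedCycle

variable [DecidableEq X] [DecidableEq Y] {N : ℕ}

def signedCycle (x : Fin N → X) (y : Fin N → Y) (p : X × Y) : ℝ :=
  ∑ i, ((if (x i, y i) = p then 1 else 0) - if (x i, y (finRotate N i)) = p then 1 else 0)

variable {δ : X × Y → ℝ} {x : Fin N → X} {y : Fin N → Y}

theorem signedCycle_apply_self (hy : Injective y) (hpos : ∀ i, 0 < δ (x i, y i))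
    (hneg : ∀ i, δ (x i, y (finRotate N i)) < 0) (j : Fin N) :
    signedCycle x y (x j, y j) = 1 := by
  have hiff : ∀ i, (x i, y i) = (x j, y j) ↔ i = j := fun i =>
    ⟨fun h => hy (congrArg Prod.snd h), fun h => h ▸ rfl⟩
  have hne : ∀ i, (x i, y (finRotate N i)) ≠ (x j, y j) :=
    fun i h => (hneg i).not_gt (h ▸ hpos j)
  rw [signedCycle, sum_sub_distrib]
  simp only [hiff, hne, sum_ite_eq', mem_univ, if_true, if_false, sum_const_zero, sub_zero]

theorem signedCycle_apply_rotate (hy : Injective y) (hpos : ∀ i, 0 < δ (x i, y i))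
    (hneg : ∀ i, δ (x i, y (finRotate N i)) < 0) (j : Fin N) :
    signedCycle x y (x j, y (finRotate N j)) = -1 := by
  have hiff : ∀ i, (x i, y (finRotate N i)) = (x j, y (finRotate N j)) ↔ i = j := fun i =>
    ⟨fun h => (finRotate N).injective (hy (congrArg Prod.snd h)), fun h => h ▸ rfl⟩
  have hne : ∀ i, (x i, y i) ≠ (x j, y (finRotate N j)) :=
    fun i h => (hneg j).not_gt (h ▸ hpos i)
  rw [signedCycle, sum_sub_distrib]
  simp only [hiff, hne, sum_ite_eq', mem_univ, if_true, if_false, sum_const_zero, zero_sub]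

theorem signedCycle_trichotomy (hy : Injective y) (hpos : ∀ i, 0 < δ (x i, y i))
    (hneg : ∀ i, δ (x i, y (finRotate N i)) < 0) (p : X × Y) :
    signedCycle x y p = 0 ∨ (signedCycle x y p = 1 ∧ 0 < δ p) ∨
      (signedCycle x y p = -1 ∧ δ p < 0) := by
  by_cases h₁ : ∃ j, (x j, y j) = p
  · obtain ⟨j, rfl⟩ := h₁
    exact Or.inr (Or.inl ⟨signedCycle_apply_self hy hpos hneg j, hpos j⟩)
  by_cases h₂ : ∃ j, (x j, y (finRotate N j)) = p
  · obtain ⟨j, rfl⟩ := h₂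
    exact Or.inr (Or.inr ⟨signedCycle_apply_rotate hy hpos hneg j, hneg j⟩)
  push Not at h₁ h₂
  left
  simp only [signedCycle, h₁, h₂, if_false, sub_zero, sum_const_zero]

end SignedCycle

variable [Fintype X] [Fintype Y]

def HasZeroMarginals (δ : X × Y → ℝ) : Prop :=
  (∀ x, ∑ y, δ (x, y) = 0) ∧ ∀ y, ∑ x, δ (x, y) = 0

theorem HasZeroMarginals.sub {δ η : X × Y → ℝ} (hδ : HasZeroMarginals δ)
    (hη : HasZeroMarginals η) : HasZeroMarginals (δ - η) :=
  ⟨fun x => by simp [sum_sub_distrib, hδ.1 x, hη.1 x],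
    fun y => by simp [sum_sub_distrib, hδ.2 y, hη.2 y]⟩

theorem HasZeroMarginals.smul {δ : X × Y → ℝ} (hδ : HasZeroMarginals δ) (c : ℝ) :
    HasZeroMarginals (c • δ) :=
  ⟨fun x => by simp [← mul_sum, hδ.1 x], fun y => by simp [← mul_sum, hδ.2 y]⟩

theorem HasZeroMarginals.exists_pos {δ : X × Y → ℝ} (hδ : HasZeroMarginals δ) (h : δ ≠ 0) :
    ∃ p, 0 < δ p := by
  obtain ⟨p, hp⟩ := Function.ne_iff.mp h
  obtain ⟨y, -, hy⟩ :=
    exists_pos_of_sum_zero_of_exists_nonzero (fun y => δ (p.1, y)) (hδ.1 p.1) ⟨p.2, mem_univ _, hp⟩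
  exact ⟨_, hy⟩

theorem HasZeroMarginals.exists_neg_of_pos {δ : X × Y → ℝ} (hδ : HasZeroMarginals δ) {x : X} {y : Y}
    (h : 0 < δ (x, y)) : ∃ y', δ (x, y') < 0 := by
  obtain ⟨y', -, hy'⟩ := exists_pos_of_sum_zero_of_exists_nonzero (fun y => -δ (x, y))
    (by simp [hδ.1 x]) ⟨y, mem_univ _, by simp [h.ne']⟩
  exact ⟨y', neg_pos.mp hy'⟩

theorem HasZeroMarginals.exists_pos_of_neg {δ : X × Y → ℝ} (hδ : HasZeroMarginals δ) {x : X} {y : Y}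
    (h : δ (x, y) < 0) : ∃ x', 0 < δ (x', y) := by
  obtain ⟨x', -, hx'⟩ := exists_pos_of_sum_zero_of_exists_nonzero (fun x => δ (x, y))
    (hδ.2 y) ⟨x, mem_univ _, h.ne⟩
  exact ⟨x', hx'⟩

theorem HasZeroMarginals.exists_cycle {δ : X × Y → ℝ} (hδ : HasZeroMarginals δ)
    (hpos : ∃ p, 0 < δ p) :
    ∃ (N : ℕ) (x : Fin N → X) (y : Fin N → Y), 0 < N ∧ Injective y ∧
      (∀ i, 0 < δ (x i, y i)) ∧ ∀ i, δ (x i, y (finRotate N i)) < 0 := by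
  obtain ⟨⟨x₀, y₀⟩, h₀⟩ := hpos
  have : Nonempty {y // ∃ x, 0 < δ (x, y)} := ⟨⟨y₀, x₀, h₀⟩⟩
  have hstep : ∀ a : {y // ∃ x, 0 < δ (x, y)},
      ∃ b : {y // ∃ x, 0 < δ (x, y)}, ∃ x, 0 < δ (x, a) ∧ δ (x, b) < 0 := by
    rintro ⟨y, x, hxy⟩
    obtain ⟨y', hy'⟩ := hδ.exists_neg_of_pos hxy
    exact ⟨⟨y', hδ.exists_pos_of_neg hy'⟩, x, hxy, hy'⟩
  obtain ⟨N, a, hN, ha, hcyc⟩ := exists_injective_cycle hstep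
  choose x hx using hcyc
  exact ⟨N, x, fun i => a i, hN, Subtype.val_injective.comp ha, fun i => (hx i).1,
    fun i => (hx i).2⟩

theorem hasZeroMarginals_signedCycle [DecidableEq X] [DecidableEq Y] {N : ℕ}
    (x : Fin N → X) (y : Fin N → Y) : HasZeroMarginals (signedCycle x y) := by
  constructor
  · intro x₀
    simp [signedCycle, sum_comm (γ := Y), sum_sub_distrib, Prod.ext_iff, ite_and]
  · intro y₀
    have hcol : ∀ (a : X) (b : Y),
        ∑ x', (if (a, b) = (x', y₀) then (1 : ℝ) else 0) = if b = y₀ then 1 else 0 :=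
      fun a b => by simp only [Prod.mk.injEq, ite_and, sum_ite_eq, mem_univ, if_true]
    simp only [signedCycle, sum_comm (γ := X), sum_sub_distrib, hcol]
    rw [sub_eq_zero, Equiv.sum_comp (finRotate N) (fun i => if y i = y₀ then (1 : ℝ) else 0)]

theorem sum_mul_signedCycle [DecidableEq X] [DecidableEq Y] {N : ℕ} (u : X → Y → ℝ)
    (x : Fin N → X) (y : Fin N → Y) :
    ∑ p : X × Y, u p.1 p.2 * signedCycle x y p =
      ∑ i, u (x i) (y i) - ∑ i, u (x i) (y (finRotate N i)) := by
  simp only [signedCycle, mul_sum, mul_sub, mul_ite, mul_one, mul_zero]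
  rw [sum_comm]
  simp [sum_sub_distrib]

theorem StrictCycMono.sum_mul_pos {u : X → Y → ℝ} {S : Set (X × Y)} (hS : StrictCycMono u S)
    {δ : X × Y → ℝ} (hδ : HasZeroMarginals δ) (hδS : ∀ p, 0 < δ p → p ∈ S) (hne : δ ≠ 0) : 0 < ∑ p : X × Y, u p.1 p.2 * δ p := by
  classical
  induction hn : (support δ).ncard using Nat.strong_induction_on generalizing δ with
  | _ n ih =>
  obtain ⟨N, x, y, hN, hy, hpos, hneg⟩ := hδ.exists_cycle (hδ.exists_pos hne)
  have hgain : ∑ i, u (x i) (y (finRotate N i)) < ∑ i, u (x i) (y i) := by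
    refine hS N x y (fun i => hδS _ (hpos i)) fun h => ?_
    have hmem : (x ⟨0, hN⟩, y (finRotate N ⟨0, hN⟩)) ∈
        ((List.ofFn fun i => (x i, y i)) : Multiset (X × Y)) :=
      h ▸ Multiset.mem_coe.2 (List.mem_ofFn.2 ⟨_, rfl⟩)
    obtain ⟨i, hi⟩ := List.mem_ofFn.1 (Multiset.mem_coe.1 hmem)
    exact (hneg ⟨0, hN⟩).not_gt (hi ▸ hpos i)
  have hc0 : signedCycle x y ≠ 0 := fun h => by
    simpa [h] using signedCycle_apply_self hy hpos hneg ⟨0, hN⟩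
  obtain ⟨ε, hε, hsign, hsupp⟩ :=
    exists_pos_support_sub_smul_ssubset (signedCycle_trichotomy hy hpos hneg) hc0
  have hsum : ∑ p : X × Y, u p.1 p.2 * δ p =
      ∑ p : X × Y, u p.1 p.2 * (δ - ε • signedCycle x y) p +
        ε * (∑ i, u (x i) (y i) - ∑ i, u (x i) (y (finRotate N i))) := by
    rw [← sum_mul_signedCycle, mul_sum, ← sum_add_distrib]
    refine sum_congr rfl fun p _ => ?_
    simp only [Pi.sub_apply, Pi.smul_apply, smul_eq_mul]
    ring
  have hrest : 0 ≤ ∑ p : X × Y, u p.1 p.2 * (δ - ε • signedCycle x y) p := by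
    by_cases h : δ - ε • signedCycle x y = 0
    · simp only [h, Pi.zero_apply, mul_zero, sum_const_zero, le_refl]
    · exact (ih _ (hn ▸ Set.ncard_lt_ncard hsupp)
        (hδ.sub ((hasZeroMarginals_signedCycle x y).smul ε)) (fun p hp => hδS p (hsign p hp))
        h rfl).le
  rw [hsum]
  linarith [mul_pos hε (sub_pos.2 hgain)]

end Marginals

theorem stmt0_general {X Y : Type*} [Fintype X] [Fintype Y]
    (u : X → Y → ℝ) (γ : X × Y → ℝ)
    (hS : StrictCycMono u {p : X × Y | 0 < γ p}) :
    ∀ γ' : X × Y → ℝ, IsDist γ' →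
      (∀ x, ∑ y, γ' (x, y) = ∑ y, γ (x, y)) →
      (∀ y, ∑ x, γ' (x, y) = ∑ x, γ (x, y)) →
      γ' ≠ γ →
      ∑ p : X × Y, u p.1 p.2 * γ' p < ∑ p : X × Y, u p.1 p.2 * γ p := by
  intro γ' hγ' hrow hcol hne
  have hδ : HasZeroMarginals (γ - γ') :=
    ⟨fun x => by simp [sum_sub_distrib, hrow x], fun y => by simp [sum_sub_distrib, hcol y]⟩
  have hδS : ∀ p, 0 < (γ - γ') p → p ∈ {p : X × Y | 0 < γ p} := fun p hp =>
    (hγ'.1 p).trans_lt (sub_pos.1 hp)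
  have hgap := hS.sum_mul_pos hδ hδS (sub_ne_zero.2 hne.symm)
  simpa [mul_sub, sum_sub_distrib] using hgap

/-- If the support of γ is strictly u-cyclically monotone, then γ is the unique maximizer
of the optimal transport problem with marginals those of γ. -/
theorem stmt0 {X Y : Type*} [Fintype X] [Fintype Y]
    (u : X → Y → ℝ) (γ : X × Y → ℝ) (hγ : IsDist γ)
    (hS : StrictCycMono u {p : X × Y | 0 < γ p}) :
    ∀ γ' : X × Y → ℝ, IsDist γ' →
      (∀ x, ∑ y, γ' (x, y) = ∑ y, γ (x, y)) →
      (∀ y, ∑ x, γ' (x, y) = ∑ x, γ (x, y)) →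
      γ' ≠ γ →
      ∑ p : X × Y, u p.1 p.2 * γ' p < ∑ p : X × Y, u p.1 p.2 * γ p :=
  stmt0_general u γ hS
end

section
/- Let X and Y be finite sets, u : X × Y → ℝ, and let γ be a probability distribution on X × Y with marginals ρ and φ. If γ is the unique maximizer of ∫ u dγ' over all probability distributions γ' on X × Y with marginals ρ and φ, then the support of γ is strictly u-cyclically monotone. -/
/-!
Suppose some cycle `(xᵢ, yᵢ)` in the support of `γ` is not beaten strictly by its rotation
`(xᵢ, yᵢ₊₁)`. Moving a small mass `ε` from every pair of the cycle to every pair of the rotated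
cycle keeps `γ` nonnegative (the cycle lies in the support) and leaves both marginals unchanged
(the two cycles have the same first and the same second coordinates), and it changes the total
utility by `ε` times the difference of the two cycle sums, which is `≥ 0`. Unless the two cycles
are the same multiset of pairs, this is a second optimal plan, contradicting uniqueness.
-/

open Finset Filter Topology

section MoveMass

variable {Z : Type*} [DecidableEq Z]

lemma Multiset.sum_mul_count [Fintype Z] (w : Z → ℝ) (μ : Multiset Z) :
    ∑ z, w z * μ.count z = (μ.map w).sum := by
  rw [Finset.sum_multiset_map_count, ← Finset.sum_subset (Finset.subset_univ μ.toFinset)]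
  · simp only [nsmul_eq_mul, mul_comm]
  · intro z _ hz
    simp [Multiset.count_eq_zero.2 (by simpa using hz)]

def moveMass (γ : Z → ℝ) (ε : ℝ) (μ ν : Multiset Z) (z : Z) : ℝ :=
  γ z + ε * (ν.count z - μ.count z)

variable {γ : Z → ℝ} {ε : ℝ} {μ ν : Multiset Z}

lemma exists_pos_mul_count_le [Finite Z] (hγ : ∀ z, 0 ≤ γ z) (hμ : ∀ z ∈ μ, 0 < γ z) :
    ∃ ε > 0, ∀ z, ε * μ.count z ≤ γ z := by
  have hnear : ∀ z, ∀ᶠ ε in 𝓝 (0 : ℝ), ε * μ.count z ≤ γ z := by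
    intro z
    by_cases hz : z ∈ μ
    · have hcont : Tendsto (fun ε : ℝ => ε * μ.count z) (𝓝 0) (𝓝 0) := by
        simpa using (tendsto_id (x := 𝓝 (0 : ℝ))).mul_const (μ.count z : ℝ)
      exact hcont.eventually (eventually_le_nhds (hμ z hz))
    · simp [Multiset.count_eq_zero.2 hz, hγ z]
  obtain ⟨ε, hle, hε⟩ := ((eventually_all.2 hnear).filter_mono nhdsWithin_le_nhds |>.and
    (self_mem_nhdsWithin : ∀ᶠ ε in 𝓝[>] (0 : ℝ), 0 < ε)).exists
  exact ⟨ε, hε, hle⟩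

lemma sum_mul_moveMass [Fintype Z] (w : Z → ℝ) :
    ∑ z, w z * moveMass γ ε μ ν z =
      ∑ z, w z * γ z + ε * ((ν.map w).sum - (μ.map w).sum) := by
  simp only [moveMass, ← Multiset.sum_mul_count, Finset.mul_sum, ← Finset.sum_sub_distrib,
    ← Finset.sum_add_distrib]
  exact Finset.sum_congr rfl fun z _ => by ring

lemma sum_mul_moveMass_of_sum_map_eq [Fintype Z] {w : Z → ℝ}
    (h : (μ.map w).sum = (ν.map w).sum) :
    ∑ z, w z * moveMass γ ε μ ν z = ∑ z, w z * γ z := by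
  rw [sum_mul_moveMass, h, sub_self, mul_zero, add_zero]

lemma moveMass_nonneg (hε : 0 ≤ ε) (hμ : ∀ z, ε * μ.count z ≤ γ z) (z : Z) :
    0 ≤ moveMass γ ε μ ν z := by
  have hν : 0 ≤ ε * ν.count z := mul_nonneg hε (Nat.cast_nonneg _)
  unfold moveMass
  linarith [hμ z]

lemma moveMass_ne (hε : ε ≠ 0) (hμν : μ ≠ ν) : moveMass γ ε μ ν ≠ γ := by
  intro h
  refine hμν (Multiset.ext.2 fun z => ?_)
  have hz := congrFun h z
  simp only [moveMass, add_eq_left, mul_eq_zero, hε, false_or, sub_eq_zero, Nat.cast_inj] at hz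
  exact hz.symm

end MoveMass

section OptimalPlan

variable {X Y : Type*} [Fintype X] [Fintype Y]

def IsUniqueOptimalPlan (u : X → Y → ℝ) (γ : X × Y → ℝ) : Prop :=
  ∀ γ' : X × Y → ℝ, IsDist γ' →
    (∀ x, ∑ y, γ' (x, y) = ∑ y, γ (x, y)) →
    (∀ y, ∑ x, γ' (x, y) = ∑ x, γ (x, y)) →
    γ' ≠ γ →
    ∑ p : X × Y, u p.1 p.2 * γ' p < ∑ p : X × Y, u p.1 p.2 * γ p

theorem IsUniqueOptimalPlan.sum_map_lt {u : X → Y → ℝ} {γ : X × Y → ℝ} (hγ : IsDist γ)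
    (hopt : IsUniqueOptimalPlan u γ) {μ ν : Multiset (X × Y)} (hμ : ∀ p ∈ μ, 0 < γ p)
    (hfst : μ.map Prod.fst = ν.map Prod.fst) (hsnd : μ.map Prod.snd = ν.map Prod.snd)
    (hμν : μ ≠ ν) :
    (ν.map fun p => u p.1 p.2).sum < (μ.map fun p => u p.1 p.2).sum := by
  classical
  obtain ⟨ε, hε, hle⟩ := exists_pos_mul_count_le hγ.1 hμ
  -- Total mass and both marginals are integrals `∑ w γ` of weights `w` factoring through a
  -- coordinate, and `μ`, `ν` give such weights the same sum.
  have hfst_sum (g : X → ℝ) : (μ.map (g ∘ Prod.fst)).sum = (ν.map (g ∘ Prod.fst)).sum := by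
    rw [← Multiset.map_map, hfst, Multiset.map_map]
  have hsnd_sum (g : Y → ℝ) : (μ.map (g ∘ Prod.snd)).sum = (ν.map (g ∘ Prod.snd)).sum := by
    rw [← Multiset.map_map, hsnd, Multiset.map_map]
  have hmass : ∑ p, moveMass γ ε μ ν p = 1 := by
    simpa [hγ.2] using sum_mul_moveMass_of_sum_map_eq (γ := γ) (ε := ε) (hfst_sum fun _ => 1)
  have hrow (x : X) : ∑ y, moveMass γ ε μ ν (x, y) = ∑ y, γ (x, y) := by
    have h := sum_mul_moveMass_of_sum_map_eq (γ := γ) (ε := ε)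
      (hfst_sum fun x' => if x' = x then 1 else 0)
    rw [Fintype.sum_prod_type, Fintype.sum_prod_type] at h
    simpa using h
  have hcol (y : Y) : ∑ x, moveMass γ ε μ ν (x, y) = ∑ x, γ (x, y) := by
    have h := sum_mul_moveMass_of_sum_map_eq (γ := γ) (ε := ε)
      (hsnd_sum fun y' => if y' = y then 1 else 0)
    rw [Fintype.sum_prod_type_right, Fintype.sum_prod_type_right] at h
    simpa using h
  have hlt := hopt (moveMass γ ε μ ν) ⟨moveMass_nonneg hε.le hle, hmass⟩ hrow hcol
    (moveMass_ne hε.ne' hμν)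
  rw [sum_mul_moveMass, add_lt_iff_neg_left] at hlt
  exact sub_neg.1 (neg_of_mul_neg_right hlt hε.le)

end OptimalPlan

/-- If γ is the unique maximizer of the optimal transport problem over distributions with
the same marginals, then the support of γ is strictly u-cyclically monotone. -/
theorem stmt1 {X Y : Type*} [Fintype X] [Fintype Y]
    (u : X → Y → ℝ) (γ : X × Y → ℝ) (hγ : IsDist γ)
    (hmax : ∀ γ' : X × Y → ℝ, IsDist γ' →
      (∀ x, ∑ y, γ' (x, y) = ∑ y, γ (x, y)) →
      (∀ y, ∑ x, γ' (x, y) = ∑ x, γ (x, y)) →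
      γ' ≠ γ →
      ∑ p : X × Y, u p.1 p.2 * γ' p < ∑ p : X × Y, u p.1 p.2 * γ p) :
    StrictCycMono u {p : X × Y | 0 < γ p} := by
  intro N x y hS hne
  have hsupp : ∀ p ∈ ((List.ofFn fun i => (x i, y i) : List (X × Y)) : Multiset (X × Y)),
      0 < γ p := by
    intro p hp
    obtain ⟨i, rfl⟩ := List.mem_ofFn.1 (Multiset.mem_coe.1 hp)
    exact hS i
  have hrot : (List.ofFn y : Multiset Y) = (List.ofFn (y ∘ finRotate N) : List Y) :=
    Multiset.coe_eq_coe.2 ((finRotate N).ofFn_comp_perm y).symm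
  simpa [List.sum_ofFn] using IsUniqueOptimalPlan.sum_map_lt (u := u) hγ hmax hsupp
    (by simp [List.map_ofFn, Function.comp_def])
    (by simpa [List.map_ofFn, Function.comp_def] using hrot) hne
end

section
/- Let X, Y be finite sets and let γ, γ' be two distinct probability distributions on X × Y with the same marginals on X and on Y. Then there exists a finite sequence of pairs (x_1,y_1),…,(x_N,y_N) with each (x_i,y_i) in the support of γ and each (x_i,y_{i+1}) (with y_{N+1}=y_1) in the support of γ', and the multiset {(x_i,y_i)} is not equal to the multiset {(x_i,y_{i+1})}. -/
/-!
Put `D = γ' - γ`: a nonzero real matrix whose rows and columns all sum to zero. From a negative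
entry `(x, y)` the zero row sum of `x` gives a positive entry `(x, y')`, and the zero column sum
of `y'` gives a negative entry `(x', y')`. Iterating this step on the finitely many negative
entries eventually closes up into a cycle. Along it `D (xᵢ, yᵢ) < 0`, forcing `γ (xᵢ, yᵢ) > 0`,
and `D (xᵢ, yᵢ₊₁) > 0`, forcing `γ' (xᵢ, yᵢ₊₁) > 0`; the two multisets differ because no
pair can be in both.
-/

theorem Function.exists_isPeriodicPt_of_finite {α : Type*} [Finite α] [Nonempty α]
    (f : α → α) : ∃ x n, 0 < n ∧ Function.IsPeriodicPt f n x := by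
  obtain ⟨m, n, hmn, heq⟩ :=
    Finite.exists_ne_map_eq_of_infinite fun n : ℕ => f^[n] (Classical.arbitrary α)
  wlog hlt : m < n generalizing m n
  · exact this n m hmn.symm heq.symm (by omega)
  refine ⟨f^[m] (Classical.arbitrary α), n - m, by omega, ?_⟩
  rw [Function.IsPeriodicPt, Function.IsFixedPt, ← Function.iterate_add_apply,
    Nat.sub_add_cancel hlt.le, heq]

theorem finRotate_val {N : ℕ} (i : Fin N) : (finRotate N i : ℕ) = (i + 1) % N := by
  have := i.neZero
  rw [finRotate_apply, Fin.val_add, Fin.val_one', Nat.add_mod_mod]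

theorem exists_cycle_of_forall_exists {α : Type*} [Finite α] [Nonempty α] {R : α → α → Prop}
    (h : ∀ a, ∃ b, R a b) :
    ∃ (N : ℕ) (a : Fin N → α), 0 < N ∧ ∀ i, R (a i) (a (finRotate N i)) := by
  choose f hf using h
  obtain ⟨x, N, hN, hx⟩ := Function.exists_isPeriodicPt_of_finite f
  refine ⟨N, fun i => f^[i] x, hN, fun i => ?_⟩
  dsimp only
  rw [finRotate_val, hx.iterate_mod_apply, Function.iterate_succ_apply']
  exact hf _

theorem coe_ofFn_ne_coe_ofFn_of_forall_not {α : Type*} {N : ℕ} (hN : 0 < N) {P : α → Prop}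
    {f g : Fin N → α} (hf : ∀ i, P (f i)) (hg : ∀ i, ¬ P (g i)) :
    (List.ofFn f : Multiset α) ≠ List.ofFn g := by
  intro hfg
  have hmem : f ⟨0, hN⟩ ∈ (List.ofFn g : Multiset α) := by
    rw [← hfg, Multiset.mem_coe, List.mem_ofFn]
    exact ⟨_, rfl⟩
  obtain ⟨j, hj⟩ := List.mem_ofFn.mp (Multiset.mem_coe.mp hmem)
  exact hg j (hj ▸ hf _)

theorem exists_neg_of_sum_eq_zero {ι : Type*} [Fintype ι] {f : ι → ℝ}
    (hsum : ∑ i, f i = 0) {i : ι} (hi : f i ≠ 0) : ∃ j, f j < 0 := by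
  obtain ⟨j, -, hj⟩ := Finset.exists_pos_of_sum_zero_of_exists_nonzero (-f)
    (by simp [hsum]) ⟨i, Finset.mem_univ _, by simpa using hi⟩
  exact ⟨j, by simpa using hj⟩

theorem exists_alternating_cycle {X Y : Type*} [Fintype X] [Fintype Y] {D : X × Y → ℝ}
    (hrow : ∀ x, ∑ y, D (x, y) = 0) (hcol : ∀ y, ∑ x, D (x, y) = 0) (hD : D ≠ 0) :
    ∃ (N : ℕ) (x : Fin N → X) (y : Fin N → Y), 0 < N ∧
      (∀ i, D (x i, y i) < 0) ∧ ∀ i, 0 < D (x i, y (finRotate N i)) := by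
  obtain ⟨p, hp⟩ := Function.ne_iff.mp hD
  obtain ⟨p, hp⟩ := exists_neg_of_sum_eq_zero (by simp [Fintype.sum_prod_type, hrow]) hp
  have : Nonempty {p // D p < 0} := ⟨⟨p, hp⟩⟩
  have step (p : {p // D p < 0}) : ∃ q : {p // D p < 0}, 0 < D (p.1.1, q.1.2) := by
    obtain ⟨y, -, hy⟩ := Finset.exists_pos_of_sum_zero_of_exists_nonzero _ (hrow p.1.1)
      ⟨p.1.2, Finset.mem_univ _, p.2.ne⟩
    obtain ⟨x, hx⟩ := exists_neg_of_sum_eq_zero (hcol y) hy.ne'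
    exact ⟨⟨(x, y), hx⟩, hy⟩
  obtain ⟨N, a, hN, ha⟩ := exists_cycle_of_forall_exists step
  exact ⟨N, fun i => (a i).1.1, fun i => (a i).1.2, hN, fun i => (a i).2, ha⟩

/-- If γ and γ' are distinct distributions on X × Y with the same marginals, then there is a
cyclic sequence of pairs with (x_i, y_i) in the support of γ and (x_i, y_{i+1}) in the support
of γ', whose two associated multisets differ. -/
theorem stmt2 {X Y : Type*} [Fintype X] [Fintype Y]
    (γ γ' : X × Y → ℝ) (hγ : IsDist γ) (hγ' : IsDist γ')
    (hmx : ∀ x, ∑ y, γ' (x, y) = ∑ y, γ (x, y))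
    (hmy : ∀ y, ∑ x, γ' (x, y) = ∑ x, γ (x, y))
    (hne : γ' ≠ γ) :
    ∃ (N : ℕ) (x : Fin N → X) (y : Fin N → Y), 0 < N ∧
      (∀ i, 0 < γ (x i, y i)) ∧
      (∀ i, 0 < γ' (x i, y (finRotate N i))) ∧
      ((List.ofFn fun i => (x i, y i)) : Multiset (X × Y)) ≠
        ((List.ofFn fun i => (x i, y (finRotate N i))) : Multiset (X × Y)) := by
  obtain ⟨N, x, y, hN, hneg, hpos⟩ := exists_alternating_cycle (D := γ' - γ)
    (by simp [Finset.sum_sub_distrib, hmx]) (by simp [Finset.sum_sub_distrib, hmy])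
    (sub_ne_zero.mpr hne)
  exact ⟨N, x, y, hN, fun i => (hγ'.1 _).trans_lt (sub_neg.mp (hneg i)),
    fun i => (hγ.1 _).trans_lt (sub_pos.mp (hpos i)),
    coe_ofFn_ne_coe_ofFn_of_forall_not hN (P := fun p => (γ' - γ) p < 0) hneg
      fun i => (hpos i).not_gt⟩
end

section
/- Let X ⊆ ℝ and Y ⊆ ℝ be finite sets and u : X × Y → ℝ strictly supermodular, i.e., u(x,y) - u(x,y') > u(x',y) - u(x',y') whenever x > x' and y > y'. Let γ be a probability distribution on X × Y whose X-marginal has full support. Then γ is the unique maximizer of ∑ u dγ' over distributions γ' with the same marginals as γ if and only if the support of γ is co-monotone (i.e., for any (x,y) and (x',y') in the support, x > x' implies y ≥ y'). -/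
/-- u is strictly supermodular. -/
def StrictSupermod {X Y : Type*} [LT X] [LT Y] (u : X → Y → ℝ) : Prop :=
  ∀ x x' y y', x' < x → y' < y → u x y' + u x' y < u x y + u x' y'

/-- A set is co-monotone: higher first coordinate implies weakly higher second coordinate. -/
def CoMono {X Y : Type*} [LT X] [LE Y] (S : Set (X × Y)) : Prop :=
  ∀ p ∈ S, ∀ q ∈ S, q.1 < p.1 → q.2 ≤ p.2

/-!
A maximizer exists since the couplings form a compact set. If a coupling has support points
(x, y) and (x', y') with x' < x and y < y', moving mass from them onto (x, y') and (x', y) keeps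
the marginals and, by strict supermodularity, raises the surplus; so every maximizer has
co-monotone support. Conversely, a co-monotone coupling is determined by its marginals: its
joint distribution function is the Fréchet upper bound H(x, y) = min (F x) (G y), and a function on
a finite poset is determined by its sums over lower sets. Hence the co-monotone coupling is the
maximizer, and any other maximizer, being co-monotone as well, equals it.
-/

open Finset

section Coupling

variable {X Y : Type*} [Fintype X] [Fintype Y]

def Coupling (γ : X × Y → ℝ) : Set (X × Y → ℝ) :=
  {g | IsDist g ∧ (∀ x, ∑ y, g (x, y) = ∑ y, γ (x, y)) ∧
    (∀ y, ∑ x, g (x, y) = ∑ x, γ (x, y))}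

def totalSurplus (u : X → Y → ℝ) (g : X × Y → ℝ) : ℝ :=
  ∑ p : X × Y, u p.1 p.2 * g p

theorem mem_coupling_self {γ : X × Y → ℝ} (hγ : IsDist γ) : γ ∈ Coupling γ :=
  ⟨hγ, fun _ => rfl, fun _ => rfl⟩

theorem isClosed_coupling (γ : X × Y → ℝ) : IsClosed (Coupling γ) := by
  simp only [Coupling, IsDist, Set.ofPred_and, Set.ofPred_forall]
  refine ((isClosed_iInter fun p => ?_).inter ?_).inter
    ((isClosed_iInter fun x => ?_).inter (isClosed_iInter fun y => ?_))
  · exact isClosed_le continuous_const (continuous_apply p)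
  all_goals exact isClosed_eq (by fun_prop) continuous_const

theorem isCompact_coupling (γ : X × Y → ℝ) : IsCompact (Coupling γ) := by
  refine (isCompact_univ_pi fun _ => isCompact_Icc (a := (0 : ℝ)) (b := 1)).of_isClosed_subset
    (isClosed_coupling γ) fun g hg p _ => ⟨hg.1.1 p, ?_⟩
  rw [← hg.1.2]
  exact single_le_sum (fun q _ => hg.1.1 q) (mem_univ p)

theorem exists_forall_totalSurplus_le (u : X → Y → ℝ) {γ : X × Y → ℝ}
    (hγ : IsDist γ) :
    ∃ g ∈ Coupling γ, ∀ g' ∈ Coupling γ, totalSurplus u g' ≤ totalSurplus u g := by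
  obtain ⟨g, hg, hmax⟩ := (isCompact_coupling γ).exists_isMaxOn ⟨γ, mem_coupling_self hγ⟩
    (by unfold totalSurplus; fun_prop : Continuous (totalSurplus u)).continuousOn
  exact ⟨g, hg, fun g' hg' => isMaxOn_iff.mp hmax g' hg'⟩

end Coupling

section Perturbation

variable {X Y : Type*} [Fintype X] [Fintype Y]

theorem mem_coupling_add_mul_tensor {γ g : X × Y → ℝ} (hg : g ∈ Coupling γ) {f : X → ℝ}
    {h : Y → ℝ} (hf : ∑ x, f x = 0) (hh : ∑ y, h y = 0) {ε : ℝ}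
    (hnonneg : ∀ p, 0 ≤ g p + ε * (f p.1 * h p.2)) :
    (fun p => g p + ε * (f p.1 * h p.2)) ∈ Coupling γ := by
  obtain ⟨⟨-, htotal⟩, hrow, hcol⟩ := hg
  refine ⟨⟨hnonneg, ?_⟩, fun x => ?_, fun y => ?_⟩
  · simp [sum_add_distrib, htotal, Fintype.sum_prod_type, ← mul_sum, hh]
  · simp [sum_add_distrib, hrow, ← mul_sum, hh]
  · simp [sum_add_distrib, hcol, ← mul_sum, ← sum_mul, hf]

theorem totalSurplus_add_mul_tensor (u : X → Y → ℝ) (g : X × Y → ℝ) (f : X → ℝ)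
    (h : Y → ℝ) (ε : ℝ) :
    totalSurplus u (fun p => g p + ε * (f p.1 * h p.2)) =
      totalSurplus u g + ε * ∑ x, ∑ y, u x y * (f x * h y) := by
  simp only [totalSurplus, mul_add, sum_add_distrib, mul_sum, Fintype.sum_prod_type]
  congr 1
  exact sum_congr rfl fun x _ => sum_congr rfl fun y _ => by ring

variable [LinearOrder X] [LinearOrder Y]

theorem exists_coupling_totalSurplus_gt {u : X → Y → ℝ} (hu : StrictSupermod u)
    {γ g : X × Y → ℝ} (hg : g ∈ Coupling γ) {x x' : X} {y y' : Y} (hx : x' < x)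
    (hy : y < y') (hxy : 0 < g (x, y)) (hxy' : 0 < g (x', y')) :
    ∃ g' ∈ Coupling γ, totalSurplus u g < totalSurplus u g' := by
  -- `f ⊗ h` is `1` at `(x, y')` and `(x', y)`, and `-1` at `(x, y)` and `(x', y')`.
  set f : X → ℝ := Pi.single x 1 - Pi.single x' 1
  set h : Y → ℝ := Pi.single y' 1 - Pi.single y 1
  set ε := min (g (x, y)) (g (x', y'))
  have hε : 0 < ε := lt_min hxy hxy'
  have hgain : ∑ a, ∑ b, u a b * (f a * h b) = u x y' + u x' y - u x y - u x' y' := by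
    simp [f, h, Pi.single_apply, mul_sub, sum_sub_distrib]
    ring
  refine ⟨_, mem_coupling_add_mul_tensor hg (f := f) (h := h) (ε := ε) ?_ ?_ fun p => ?_, ?_⟩
  · simp [f]
  · simp [h]
  · obtain ⟨a, b⟩ := p
    have hεxy : ε ≤ g (x, y) := min_le_left _ _
    have hεxy' : ε ≤ g (x', y') := min_le_right _ _
    have := hg.1.1 (a, b)
    simp only [f, h, Pi.sub_apply, Pi.single_apply]
    split_ifs <;> subst_vars <;> norm_num <;> linarith
  · rw [totalSurplus_add_mul_tensor, hgain]
    nlinarith [hu x x' y' y hx hy]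

theorem coMono_of_forall_totalSurplus_le {u : X → Y → ℝ} (hu : StrictSupermod u)
    {γ g : X × Y → ℝ} (hg : g ∈ Coupling γ)
    (hmax : ∀ g' ∈ Coupling γ, totalSurplus u g' ≤ totalSurplus u g) :
    CoMono {p | 0 < g p} := by
  intro p hp q hq hlt
  by_contra! hgt
  obtain ⟨g', hg', hgain⟩ := exists_coupling_totalSurplus_gt hu hg hlt hgt hp hq
  exact (hmax g' hg').not_gt hgain

end Perturbation

section Uniqueness

theorem eq_of_forall_sum_filter_le_eq {α M : Type*} [Fintype α] [PartialOrder α]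
    [DecidableLE α] [AddCommGroup M] {g h : α → M}
    (H : ∀ p, ∑ q with q ≤ p, g q = ∑ q with q ≤ p, h q) : g = h := by
  classical
  funext p
  induction p using WellFoundedLT.induction with
  | _ p ih =>
  have hsplit (f : α → M) : ∑ q with q ≤ p, f q = f p + ∑ q with q < p, f q := by
    rw [← add_sum_erase _ f (by simp : p ∈ ({q | q ≤ p} : Finset α))]
    congr 2
    ext q
    simp [lt_iff_le_and_ne, and_comm]
  have := H p
  rwa [hsplit, hsplit, sum_congr rfl fun q hq => ih q (by simpa using hq), add_left_inj] at this

variable {X Y : Type*} [Fintype X] [Fintype Y]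

theorem sum_filter_fst_eq {g h : X × Y → ℝ} (hrow : ∀ x, ∑ y, g (x, y) = ∑ y, h (x, y))
    (P : X → Prop) [DecidablePred P] : ∑ q with P q.1, g q = ∑ q with P q.1, h q := by
  simp only [sum_filter, Fintype.sum_prod_type]
  exact sum_congr rfl fun x _ => by by_cases hx : P x <;> simp [hx, hrow]

theorem sum_filter_snd_eq {g h : X × Y → ℝ} (hcol : ∀ y, ∑ x, g (x, y) = ∑ x, h (x, y))
    (P : Y → Prop) [DecidablePred P] : ∑ q with P q.2, g q = ∑ q with P q.2, h q := by
  simp only [sum_filter, Fintype.sum_prod_type_right]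
  exact sum_congr rfl fun y _ => by by_cases hy : P y <;> simp [hy, hcol]

variable [LinearOrder X] [LinearOrder Y]

theorem sum_filter_le_eq_min_of_coMono {g : X × Y → ℝ} (hg : ∀ p, 0 ≤ g p)
    (hco : CoMono {p | 0 < g p}) (p : X × Y) :
    ∑ q with q ≤ p, g q = min (∑ q with q.1 ≤ p.1, g q) (∑ q with q.2 ≤ p.2, g q) := by
  have hfst : ∑ q with q.1 ≤ p.1, g q =
      ∑ q with q ≤ p, g q + ∑ q with q.1 ≤ p.1 ∧ p.2 < q.2, g q := by
    rw [← sum_filter_add_sum_filter_not _ (·.2 ≤ p.2), filter_filter, filter_filter]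
    simp only [Prod.le_def, not_le]
  have hsnd : ∑ q with q.2 ≤ p.2, g q =
      ∑ q with q ≤ p, g q + ∑ q with p.1 < q.1 ∧ q.2 ≤ p.2, g q := by
    rw [← sum_filter_add_sum_filter_not _ (·.1 ≤ p.1), filter_filter, filter_filter]
    simp only [Prod.le_def, not_le, and_comm]
  have hsupport : (∑ q with q.1 ≤ p.1 ∧ p.2 < q.2, g q) = 0 ∨
      (∑ q with p.1 < q.1 ∧ q.2 ≤ p.2, g q) = 0 := by
    by_contra! ⟨hA, hB⟩
    obtain ⟨a, ha, hga⟩ := exists_ne_zero_of_sum_ne_zero hA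
    obtain ⟨b, hb, hgb⟩ := exists_ne_zero_of_sum_ne_zero hB
    simp only [mem_filter, mem_univ, true_and] at ha hb
    have hab := hco b ((hg b).lt_of_ne' hgb) a ((hg a).lt_of_ne' hga) (ha.1.trans_lt hb.1)
    exact (ha.2.trans_le (hab.trans hb.2)).false
  have hnonneg (P : X × Y → Prop) [DecidablePred P] : 0 ≤ ∑ q with P q, g q :=
    sum_nonneg fun q _ => hg q
  rcases hsupport with h | h
  · rw [hfst, hsnd, h, add_zero, min_eq_left (le_add_of_nonneg_right (hnonneg _))]
  · rw [hfst, hsnd, h, add_zero, min_eq_right (le_add_of_nonneg_right (hnonneg _))]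

theorem eq_of_coMono {γ g h : X × Y → ℝ} (hg : g ∈ Coupling γ) (hh : h ∈ Coupling γ)
    (hgco : CoMono {p | 0 < g p}) (hhco : CoMono {p | 0 < h p}) : g = h :=
  eq_of_forall_sum_filter_le_eq fun p => by
    rw [sum_filter_le_eq_min_of_coMono hg.1.1 hgco, sum_filter_le_eq_min_of_coMono hh.1.1 hhco,
      sum_filter_fst_eq (fun x => (hg.2.1 x).trans (hh.2.1 x).symm) (· ≤ p.1),
      sum_filter_snd_eq (fun y => (hg.2.2 y).trans (hh.2.2 y).symm) (· ≤ p.2)]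

end Uniqueness

theorem stmt3_general {X Y : Type*} [Fintype X] [Fintype Y] [LinearOrder X] [LinearOrder Y]
    (u : X → Y → ℝ) (hu : StrictSupermod u)
    (γ : X × Y → ℝ) (hγ : IsDist γ) :
    (∀ γ' : X × Y → ℝ, IsDist γ' →
        (∀ x, ∑ y, γ' (x, y) = ∑ y, γ (x, y)) →
        (∀ y, ∑ x, γ' (x, y) = ∑ x, γ (x, y)) →
        γ' ≠ γ →
        ∑ p : X × Y, u p.1 p.2 * γ' p < ∑ p : X × Y, u p.1 p.2 * γ p)
      ↔ CoMono {p : X × Y | 0 < γ p} := by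
  constructor
  · intro hunique
    refine coMono_of_forall_totalSurplus_le hu (mem_coupling_self hγ) fun γ' hγ' => ?_
    rcases eq_or_ne γ' γ with rfl | hne
    · exact le_rfl
    · exact (hunique γ' hγ'.1 hγ'.2.1 hγ'.2.2 hne).le
  · intro hco γ' hdist hrow hcol hne
    have hγ' : γ' ∈ Coupling γ := ⟨hdist, hrow, hcol⟩
    obtain ⟨g, hg, hmax⟩ := exists_forall_totalSurplus_le u hγ
    obtain rfl : g = γ :=
      eq_of_coMono hg (mem_coupling_self hγ) (coMono_of_forall_totalSurplus_le hu hg hmax) hco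
    refine (hmax γ' hγ').lt_of_ne fun heq => hne ?_
    have hmax' : ∀ g' ∈ Coupling g, totalSurplus u g' ≤ totalSurplus u γ' := heq ▸ hmax
    exact eq_of_coMono hγ' hg (coMono_of_forall_totalSurplus_le hu hγ' hmax') hco

/-- For strictly supermodular u and γ whose X-marginal has full support: γ is the unique
maximizer of the optimal transport problem with its own marginals iff its support is
co-monotone. -/
theorem stmt3 {X Y : Type*} [Fintype X] [Fintype Y] [LinearOrder X] [LinearOrder Y]
    (u : X → Y → ℝ) (hu : StrictSupermod u)
    (γ : X × Y → ℝ) (hγ : IsDist γ)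
    (hfull : ∀ x, 0 < ∑ y, γ (x, y)) :
    (∀ γ' : X × Y → ℝ, IsDist γ' →
        (∀ x, ∑ y, γ' (x, y) = ∑ y, γ (x, y)) →
        (∀ y, ∑ x, γ' (x, y) = ∑ x, γ (x, y)) →
        γ' ≠ γ →
        ∑ p : X × Y, u p.1 p.2 * γ' p < ∑ p : X × Y, u p.1 p.2 * γ p)
      ↔ CoMono {p : X × Y | 0 < γ p} :=
  stmt3_general u hu γ hγ
end

section
/- Let X, Y be finite totally ordered sets and u : X × Y → ℝ strictly supermodular. If a set S ⊆ X × Y is co-monotone (for all (x,y),(x',y') ∈ S, x > x' implies y ≥ y'), then S is strictly u-cyclically monotone. -/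
/-- A nonempty multiset over a linear order has a maximal element. -/
lemma mset_exists_max {α : Type*} [LinearOrder α] (s : Multiset α) (hs : s ≠ 0) :
    ∃ a ∈ s, ∀ b ∈ s, b ≤ a := by
  induction s using Multiset.induction_on with
  | empty => exact absurd rfl hs
  | cons a s ih =>
    rcases eq_or_ne s 0 with rfl | h
    · exact ⟨a, Multiset.mem_cons_self a 0, by simp⟩
    · obtain ⟨m, hm, hmax⟩ := ih h
      refine ⟨max a m, ?_, ?_⟩
      · rcases le_total a m with hle | hle
        · rw [max_eq_right hle]; exact Multiset.mem_cons_of_mem hm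
        · rw [max_eq_left hle]; exact Multiset.mem_cons_self a s
      · intro b hb
        rcases Multiset.mem_cons.mp hb with rfl | hb
        · exact le_max_left _ _
        · exact (hmax b hb).trans (le_max_right _ _)

/-- An aligned nonempty multiset contains the pair of maxima. -/
lemma aligned_max_mem {X Y : Type*} [LinearOrder X] [LinearOrder Y]
    (M : Multiset (X × Y)) (hA : ∀ p ∈ M, ∀ q ∈ M, q.1 < p.1 → q.2 ≤ p.2)
    {a : X} {b : Y} (haM : a ∈ M.map Prod.fst) (hamax : ∀ c ∈ M.map Prod.fst, c ≤ a)
    (hbM : b ∈ M.map Prod.snd) (hbmax : ∀ c ∈ M.map Prod.snd, c ≤ b) : (a, b) ∈ M := by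
  obtain ⟨p0, hp0M, hp0a⟩ := Multiset.mem_map.mp haM
  classical
  set Ma := M.filter (fun p => p.1 = a) with hMa
  have hp0Ma : p0 ∈ Ma := Multiset.mem_filter.mpr ⟨hp0M, hp0a⟩
  have hne : Ma.map Prod.snd ≠ 0 := by
    intro h
    have : p0.2 ∈ Ma.map Prod.snd := Multiset.mem_map.mpr ⟨p0, hp0Ma, rfl⟩
    rw [h] at this; exact absurd this (Multiset.notMem_zero _)
  obtain ⟨t, htmem, htmax⟩ := mset_exists_max _ hne
  obtain ⟨p, hpMa, hpt⟩ := Multiset.mem_map.mp htmem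
  have hpM : p ∈ M := (Multiset.mem_filter.mp hpMa).1
  have hpa : p.1 = a := (Multiset.mem_filter.mp hpMa).2
  obtain ⟨q, hqM, hqb⟩ := Multiset.mem_map.mp hbM
  have h1 : b ≤ p.2 := by
    rcases eq_or_lt_of_le (hamax q.1 (Multiset.mem_map.mpr ⟨q, hqM, rfl⟩)) with hqa | hqa
    · have hqMa : q ∈ Ma := Multiset.mem_filter.mpr ⟨hqM, hqa⟩
      have := htmax q.2 (Multiset.mem_map.mpr ⟨q, hqMa, rfl⟩)
      rw [← hpt] at this; exact hqb ▸ this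
    · have := hA p hpM q hqM (by rw [hpa]; exact hqa)
      exact hqb ▸ this
  have h2 : p.2 ≤ b := hbmax p.2 (Multiset.mem_map.mpr ⟨p, hpM, rfl⟩)
  have hpab : p = (a, b) := Prod.ext hpa (le_antisymm h2 h1)
  exact hpab ▸ hpM

/-- Aligned multisets are uniquely determined by their coordinate multisets. -/
lemma aligned_unique {X Y : Type*} [LinearOrder X] [LinearOrder Y] :
    ∀ (n : ℕ) (M M' : Multiset (X × Y)), Multiset.card M = n →
    (∀ p ∈ M, ∀ q ∈ M, q.1 < p.1 → q.2 ≤ p.2) →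
    (∀ p ∈ M', ∀ q ∈ M', q.1 < p.1 → q.2 ≤ p.2) →
    M.map Prod.fst = M'.map Prod.fst → M.map Prod.snd = M'.map Prod.snd → M = M' := by
  classical
  intro n
  induction n with
  | zero =>
    intro M M' hc _ _ hf _
    have hM : M = 0 := Multiset.card_eq_zero.mp hc
    subst hM
    have : Multiset.card (M'.map Prod.fst) = 0 := by rw [← hf]; simp
    simp only [Multiset.card_map] at this
    exact (Multiset.card_eq_zero.mp this).symm
  | succ n ih =>
    intro M M' hc hA hA' hf hs
    have hfne : M.map Prod.fst ≠ 0 := by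
      intro h
      have := congrArg Multiset.card h
      simp [hc] at this
    have hsne : M.map Prod.snd ≠ 0 := by
      intro h
      have := congrArg Multiset.card h
      simp [hc] at this
    obtain ⟨a, haM, hamax⟩ := mset_exists_max _ hfne
    obtain ⟨b, hbM, hbmax⟩ := mset_exists_max _ hsne
    have habM : (a, b) ∈ M := aligned_max_mem M hA haM hamax hbM hbmax
    have habM' : (a, b) ∈ M' :=
      aligned_max_mem M' hA' (hf ▸ haM) (hf ▸ hamax) (hs ▸ hbM) (hs ▸ hbmax)
    have e1 : (a, b) ::ₘ M.erase (a, b) = M := Multiset.cons_erase habM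
    have e2 : (a, b) ::ₘ M'.erase (a, b) = M' := Multiset.cons_erase habM'
    have hcard : Multiset.card (M.erase (a, b)) = n := by
      have := congrArg Multiset.card e1
      simp at this
      omega
    have hfe : (M.erase (a, b)).map Prod.fst = (M'.erase (a, b)).map Prod.fst := by
      have h1 : a ::ₘ (M.erase (a, b)).map Prod.fst = a ::ₘ (M'.erase (a, b)).map Prod.fst := by
        have := hf
        rw [← e1, ← e2] at this
        simpa using this
      exact (Multiset.cons_inj_right a).mp h1
    have hse : (M.erase (a, b)).map Prod.snd = (M'.erase (a, b)).map Prod.snd := by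
      have h1 : b ::ₘ (M.erase (a, b)).map Prod.snd = b ::ₘ (M'.erase (a, b)).map Prod.snd := by
        have := hs
        rw [← e1, ← e2] at this
        simpa using this
      exact (Multiset.cons_inj_right b).mp h1
    have := ih (M.erase (a, b)) (M'.erase (a, b)) hcard
      (fun p hp q hq => hA p (Multiset.mem_of_mem_erase hp) q (Multiset.mem_of_mem_erase hq))
      (fun p hp q hq => hA' p (Multiset.mem_of_mem_erase hp) q (Multiset.mem_of_mem_erase hq))
      hfe hse
    rw [← e1, ← e2, this]

/-- Sum as a multiset sum. -/
lemma sum_eq_msum {X Y : Type*} (u : X → Y → ℝ) {N : ℕ} (x : Fin N → X) (b : Fin N → Y) :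
    ∑ i, u (x i) (b i) =
      (((List.ofFn fun i => (x i, b i)) : Multiset (X × Y)).map (fun p => u p.1 p.2)).sum := by
  rw [Multiset.map_coe, Multiset.sum_coe, List.map_ofFn, List.sum_ofFn]
  rfl

lemma aligned_of_fun {X Y : Type*} [LinearOrder X] [LinearOrder Y] {N : ℕ}
    (x : Fin N → X) (b : Fin N → Y) (hal : ∀ i j, x j < x i → b j ≤ b i) :
    ∀ p ∈ ((List.ofFn fun i => (x i, b i)) : Multiset (X × Y)),
      ∀ q ∈ ((List.ofFn fun i => (x i, b i)) : Multiset (X × Y)), q.1 < p.1 → q.2 ≤ p.2 := by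
  intro p hp q hq hlt
  rw [Multiset.mem_coe, List.mem_ofFn] at hp hq
  obtain ⟨i, hi⟩ := hp
  obtain ⟨j, hj⟩ := hq
  subst hi; subst hj
  exact hal i j hlt

/-- The key lemma, for an arbitrary permutation. -/
lemma key_lemma {X Y : Type*} [LinearOrder X] [LinearOrder Y]
    (u : X → Y → ℝ) (hu : StrictSupermod u) {N : ℕ} (x : Fin N → X) (y : Fin N → Y)
    (hal : ∀ i j, x j < x i → y j ≤ y i) (τ : Equiv.Perm (Fin N))
    (hne : ((List.ofFn fun i => (x i, y i)) : Multiset (X × Y)) ≠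
      ((List.ofFn fun i => (x i, y (τ i))) : Multiset (X × Y))) :
    ∑ i, u (x i) (y (τ i)) < ∑ i, u (x i) (y i) := by
  classical
  set F : Equiv.Perm (Fin N) → ℝ := fun σ => ∑ i, u (x i) (y (σ i)) with hF
  -- swapping a crossing strictly increases the sum
  have hswap : ∀ (σ : Equiv.Perm (Fin N)) (i j : Fin N), x j < x i → y (σ i) < y (σ j) →
      F σ < F (σ * Equiv.swap i j) := by
    intro σ i j hx hy
    have hij : i ≠ j := by rintro rfl; exact lt_irrefl _ hx
    have hjmem : j ∈ (Finset.univ.erase i) :=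
      Finset.mem_erase.mpr ⟨hij.symm, Finset.mem_univ j⟩
    have expand : ∀ g : Fin N → ℝ,
        ∑ k, g k = g i + (g j + ∑ k ∈ (Finset.univ.erase i).erase j, g k) := by
      intro g
      rw [Finset.add_sum_erase _ g hjmem, Finset.add_sum_erase _ g (Finset.mem_univ i)]
    have e1 := expand (fun k => u (x k) (y (σ k)))
    have e2 := expand (fun k => u (x k) (y (σ (Equiv.swap i j k))))
    have hrest : ∑ k ∈ (Finset.univ.erase i).erase j, u (x k) (y (σ (Equiv.swap i j k)))
        = ∑ k ∈ (Finset.univ.erase i).erase j, u (x k) (y (σ k)) := by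
      refine Finset.sum_congr rfl fun k hk => ?_
      obtain ⟨hkj, hki, -⟩ := Finset.mem_erase.mp hk |>.imp id (Finset.mem_erase.mp ·)
      rw [Equiv.swap_apply_of_ne_of_ne hki hkj]
    have hkey : u (x i) (y (σ i)) + u (x j) (y (σ j)) <
        u (x i) (y (σ j)) + u (x j) (y (σ i)) := hu (x i) (x j) (y (σ j)) (y (σ i)) hx hy
    have : F σ = u (x i) (y (σ i)) + (u (x j) (y (σ j)) +
        ∑ k ∈ (Finset.univ.erase i).erase j, u (x k) (y (σ k))) := e1
    rw [this]
    have : F (σ * Equiv.swap i j) = u (x i) (y (σ j)) + (u (x j) (y (σ i)) +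
        ∑ k ∈ (Finset.univ.erase i).erase j, u (x k) (y (σ k))) := by
      have : F (σ * Equiv.swap i j) = ∑ k, u (x k) (y (σ (Equiv.swap i j k))) := rfl
      rw [this, e2, hrest, Equiv.swap_apply_left, Equiv.swap_apply_right]
    rw [this]
    linarith
  -- maximizer
  obtain ⟨σs, -, hmax⟩ := Finset.exists_max_image Finset.univ F ⟨1, Finset.mem_univ 1⟩
  replace hmax : ∀ σ, F σ ≤ F σs := fun σ => hmax σ (Finset.mem_univ σ)
  -- the maximizer is aligned
  have hstar : ∀ i j, x j < x i → y (σs j) ≤ y (σs i) := by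
    intro i j hx
    by_contra h
    push_neg at h
    exact absurd (hmax (σs * Equiv.swap i j)) (not_le.mpr (hswap σs i j hx h))
  -- multiset equalities
  have hsndeq : ∀ σ : Equiv.Perm (Fin N),
      ((List.ofFn fun i => y (σ i)) : Multiset Y) = ((List.ofFn y) : Multiset Y) := by
    intro σ
    exact Multiset.coe_eq_coe.mpr (σ.ofFn_comp_perm y)
  have hfst : ∀ b : Fin N → Y,
      (((List.ofFn fun i => (x i, b i)) : Multiset (X × Y)).map Prod.fst) =
        ((List.ofFn x) : Multiset X) := by
    intro b
    rw [Multiset.map_coe, List.map_ofFn]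
    rfl
  have hsnd : ∀ b : Fin N → Y,
      (((List.ofFn fun i => (x i, b i)) : Multiset (X × Y)).map Prod.snd) =
        ((List.ofFn b) : Multiset Y) := by
    intro b
    rw [Multiset.map_coe, List.map_ofFn]
    rfl
  have huniq : ∀ σ : Equiv.Perm (Fin N), (∀ i j, x j < x i → y (σ j) ≤ y (σ i)) →
      ((List.ofFn fun i => (x i, y i)) : Multiset (X × Y)) =
        ((List.ofFn fun i => (x i, y (σ i))) : Multiset (X × Y)) := by
    intro σ hσ
    refine aligned_unique _ _ _ rfl (aligned_of_fun x y hal)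
      (aligned_of_fun x (fun i => y (σ i)) hσ) ?_ ?_
    · rw [hfst y, hfst (fun i => y (σ i))]
    · rw [hsnd y, hsnd (fun i => y (σ i)), hsndeq σ]
  -- the maximum equals the identity sum
  have hsum_star : F σs = ∑ i, u (x i) (y i) := by
    have h1 : F σs = (((List.ofFn fun i => (x i, y (σs i))) : Multiset (X × Y)).map
        (fun p => u p.1 p.2)).sum := sum_eq_msum u x (fun i => y (σs i))
    have h2 : ∑ i, u (x i) (y i) = (((List.ofFn fun i => (x i, y i)) : Multiset (X × Y)).map
        (fun p => u p.1 p.2)).sum := sum_eq_msum u x y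
    rw [h1, h2, huniq σs hstar]
  -- τ is not aligned
  have hτ : ¬ (∀ i j, x j < x i → y (τ j) ≤ y (τ i)) := fun h => hne (huniq τ h)
  push_neg at hτ
  obtain ⟨i, j, hx, hy⟩ := hτ
  calc ∑ i, u (x i) (y (τ i)) = F τ := rfl
    _ < F (τ * Equiv.swap i j) := hswap τ i j hx hy
    _ ≤ F σs := hmax _
    _ = ∑ i, u (x i) (y i) := hsum_star

/-- If u is strictly supermodular and S is co-monotone, then S is strictly u-cyclically
monotone. -/
theorem stmt4 {X Y : Type*} [Fintype X] [Fintype Y] [LinearOrder X] [LinearOrder Y]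
    (u : X → Y → ℝ) (hu : StrictSupermod u)
    (S : Set (X × Y)) (hS : CoMono S) :
    StrictCycMono u S := by
  intro N x y hmem hne
  exact key_lemma u hu x y
    (fun i j hx => hS (x i, y i) (hmem i) (x j, y j) (hmem j) hx)
    (finRotate N) hne
end

section
/- Let X, Y be finite totally ordered sets and u : X × Y → ℝ strictly supermodular. If a set S ⊆ X × Y is u-cyclically monotone (with weak inequality), then S is co-monotone: for all (x,y), (x',y') ∈ S, x > x' implies y ≥ y'. -/
/-- A set `S ⊆ X × Y` is (weakly) `u`-cyclically monotone. -/
def CycMono {X Y : Type*} (u : X → Y → ℝ) (S : Set (X × Y)) : Prop :=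
  ∀ (N : ℕ) (x : Fin N → X) (y : Fin N → Y),
    (∀ i, (x i, y i) ∈ S) →
    ∑ i, u (x i) (y (finRotate N i)) ≤ ∑ i, u (x i) (y i)

theorem CycMono.swap_le {X Y : Type*} {u : X → Y → ℝ} {S : Set (X × Y)} (hS : CycMono u S)
    {p q : X × Y} (hp : p ∈ S) (hq : q ∈ S) :
    u p.1 q.2 + u q.1 p.2 ≤ u p.1 p.2 + u q.1 q.2 := by
  have hpair : ∀ i, (![p.1, q.1] i, ![p.2, q.2] i) ∈ S := by
    intro i
    fin_cases i
    · exact hp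
    · exact hq
  have hrot₀ : finRotate 2 0 = 1 := rfl
  have hrot₁ : finRotate 2 1 = 0 := rfl
  simpa only [Fin.sum_univ_two, hrot₀, hrot₁, Matrix.cons_val_zero, Matrix.cons_val_one]
    using hS 2 ![p.1, q.1] ![p.2, q.2] hpair

theorem stmt5_general {X Y : Type*} [LinearOrder X] [LinearOrder Y]
    (u : X → Y → ℝ) (hu : StrictSupermod u)
    (S : Set (X × Y)) (hS : CycMono u S) :
    CoMono S := by
  intro p hp q hq hx
  by_contra hy
  have hstrict := hu p.1 q.1 q.2 p.2 hx (not_le.mp hy)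
  have hswap := hS.swap_le hp hq
  linarith

/-- If u is strictly supermodular and S is u-cyclically monotone (weak inequality), then S
is co-monotone. -/
theorem stmt5 {X Y : Type*} [Fintype X] [Fintype Y] [LinearOrder X] [LinearOrder Y]
    (u : X → Y → ℝ) (hu : StrictSupermod u)
    (S : Set (X × Y)) (hS : CycMono u S) :
    CoMono S :=
  stmt5_general u hu S hS
end

section
/- Let Θ and R be finite sets and s : Θ → Δ(R) a map to probability distributions on R (a 'communication mechanism'). Define the bipartite graph G(s) on vertex sets Θ and R linking θ and r iff r is in the support of s(θ). If there exist linear orders ≽_Θ on Θ and ≽_R on R making s monotone (for all θ ≻ θ', r ∈ supp(s(θ)), r' ∈ supp(s(θ')), we have r ≽ r'), then G(s) is acyclic. -/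
/-- s θ is a probability distribution on a finite type, for each θ. -/
def IsMech {Θ R : Type*} [Fintype R] (s : Θ → R → ℝ) : Prop :=
  ∀ θ, (∀ r, 0 ≤ s θ r) ∧ ∑ r, s θ r = 1

/-- The bipartite graph of a communication mechanism: θ is linked to r iff r ∈ supp(s θ). -/
def mechGraph {Θ R : Type*} (s : Θ → R → ℝ) : SimpleGraph (Θ ⊕ R) :=
  SimpleGraph.fromRel (fun a b =>
    match a, b with
    | Sum.inl θ, Sum.inr r => 0 < s θ r
    | _, _ => False)

/-- s is monotone with respect to a (reflexive total) order leΘ on Θ and an order leR on R: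
whenever θ is strictly above θ', every action in supp(s θ) is weakly above every action in
supp(s θ'). Here `¬ leΘ θ θ'` expresses θ ≻ θ' for a total order leΘ. -/
def MonoMech {Θ R : Type*} (s : Θ → R → ℝ) (leΘ : Θ → Θ → Prop) (leR : R → R → Prop) : Prop :=
  ∀ θ θ', ¬ leΘ θ θ' → ∀ r r', 0 < s θ r → 0 < s θ' r' → leR r' r

/-!
Take a cycle of `G(s)` and the `≽_Θ`-largest type `θ` on it. Its two neighbours `r₁ ≠ r₂` on the
cycle are each adjacent to a further type of the cycle, which lies strictly below `θ`. Monotonicity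
applied to both pairs gives `r₁ ≼ r₂` and `r₂ ≼ r₁`, hence `r₁ = r₂`, a contradiction.
-/

theorem Set.Finite.exists_forall_rel_of_total {α : Type*} {r : α → α → Prop} [IsTrans α r]
    [Std.Total r] {S : Set α} (hS : S.Finite) (hne : S.Nonempty) : ∃ m ∈ S, ∀ x ∈ S, r x m := by
  have : Nonempty S := hne.to_subtype
  have : Finite S := hS.to_subtype
  obtain ⟨m, hm⟩ := (Std.Total.directed (r := r) ((↑) : S → α)).finite_le id
  exact ⟨m, m.2, fun x hx => hm ⟨x, hx⟩⟩

lemma SimpleGraph.Walk.IsCycle.exists_adj_snd {V : Type*} {G : SimpleGraph V} {u : V}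
    {c : G.Walk u u} (hc : c.IsCycle) : ∃ x ∈ c.support, x ≠ u ∧ G.Adj c.snd x := by
  have hlen := hc.three_le_length
  refine ⟨c.getVert 2, c.getVert_mem_support 2, fun h => ?_, c.adj_getVert_succ (by omega)⟩
  have := (hc.getVert_endpoint_iff (by omega)).1 h
  omega

section mechGraph

variable {Θ R : Type*} {s : Θ → R → ℝ}

@[simp]
lemma mechGraph_adj_inl_inr {θ : Θ} {r : R} : (mechGraph s).Adj (.inl θ) (.inr r) ↔ 0 < s θ r := by
  simp [mechGraph]

@[simp]
lemma mechGraph_adj_inr_inl {θ : Θ} {r : R} : (mechGraph s).Adj (.inr r) (.inl θ) ↔ 0 < s θ r := by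
  simp [mechGraph]

@[simp]
lemma not_mechGraph_adj_inl_inl {θ θ' : Θ} : ¬ (mechGraph s).Adj (.inl θ) (.inl θ') := by
  simp [mechGraph]

@[simp]
lemma not_mechGraph_adj_inr_inr {r r' : R} : ¬ (mechGraph s).Adj (.inr r) (.inr r') := by
  simp [mechGraph]

lemma exists_inl_mem_support_of_not_nil {v : Θ ⊕ R} {c : (mechGraph s).Walk v v} (hc : ¬ c.Nil) :
    ∃ θ, .inl θ ∈ c.support := by
  have hadj := c.adj_snd hc
  rcases v with θ | _
  · exact ⟨θ, c.start_mem_support⟩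
  · rcases hsnd : c.snd with θ | _
    · exact ⟨θ, hsnd ▸ c.getVert_mem_support 1⟩
    · simp [hsnd] at hadj

lemma exists_lower_adj_snd_of_isCycle {le : Θ → Θ → Prop} [Std.Antisymm le] {θ : Θ}
    {c : (mechGraph s).Walk (.inl θ) (.inl θ)} (hc : c.IsCycle)
    (htop : ∀ θ', .inl θ' ∈ c.support → le θ' θ) :
    ∃ r θ', c.snd = .inr r ∧ 0 < s θ r ∧ 0 < s θ' r ∧ ¬ le θ θ' := by
  obtain ⟨x, hx, hxθ, hadj⟩ := hc.exists_adj_snd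
  have hsnd := c.adj_snd hc.not_nil
  rcases hr : c.snd with _ | r
  · simp [hr] at hsnd
  rw [hr] at hsnd hadj
  rcases x with θ' | _
  · refine ⟨r, θ', rfl, by simpa using hsnd, by simpa using hadj, fun hle => hxθ ?_⟩
    rw [antisymm hle (htop θ' hx)]
  · simp at hadj

end mechGraph

theorem stmt6_general {Θ R : Type*}
    (s : Θ → R → ℝ)
    (leΘ : Θ → Θ → Prop) (leR : R → R → Prop)
    (hΘ : IsLinearOrder Θ leΘ) (hR : IsLinearOrder R leR)
    (hmono : MonoMech s leΘ leR) :
    (mechGraph s).IsAcyclic := by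
  classical
  intro v c hc
  obtain ⟨θ, hθc, htop⟩ :=
    (c.support.finite_toSet.preimage Sum.inl_injective.injOn).exists_forall_rel_of_total
      (r := leΘ) (exists_inl_mem_support_of_not_nil hc.not_nil)
  set c' := c.rotate (.inl θ) hθc
  have hc' : c'.IsCycle := hc.rotate hθc
  have htop' : ∀ θ', .inl θ' ∈ c'.support → leΘ θ' θ := fun θ' h =>
    htop θ' ((c.mem_support_rotate_iff _ hθc).1 h)
  obtain ⟨r₁, θ₁, hr₁, h₁, h₁', hθ₁⟩ := exists_lower_adj_snd_of_isCycle hc' htop'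
  obtain ⟨r₂, θ₂, hr₂, h₂, h₂', hθ₂⟩ :=
    exists_lower_adj_snd_of_isCycle hc'.reverse (by simpa using htop')
  rw [SimpleGraph.Walk.snd_reverse] at hr₂
  have : r₁ = r₂ := antisymm (hmono θ θ₁ hθ₁ r₂ r₁ h₂ h₁') (hmono θ θ₂ hθ₂ r₁ r₂ h₁ h₂')
  exact hc'.snd_ne_penultimate (by rw [hr₁, hr₂, this])

/-- If there exist linear orders on Θ and R making s monotone, then the bipartite graph G(s)
is acyclic. -/
theorem stmt6 {Θ R : Type*} [Fintype Θ] [Fintype R]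
    (s : Θ → R → ℝ) (hs : IsMech s)
    (leΘ : Θ → Θ → Prop) (leR : R → R → Prop)
    (hΘ : IsLinearOrder Θ leΘ) (hR : IsLinearOrder R leR)
    (hmono : MonoMech s leΘ leR) :
    (mechGraph s).IsAcyclic :=
  stmt6_general s leΘ leR hΘ hR hmono
end

section
/- Let Θ and R be finite sets and s : Θ → Δ(R). If s is monotone with respect to some linear orders on Θ and R, then s has no Type (1) forbidden triple: there do not exist three distinct actions r₁,r₂,r₃ ∈ R and four distinct states θ₁,θ₂,θ₃,θ₄ ∈ Θ such that r_k ∈ supp(s(θ_k)) for k=1,2,3 and {r₁,r₂,r₃} ⊆ supp(s(θ₄)). -/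
/-- A monotone mechanism has no Type (1) forbidden triple. -/
theorem stmt7 {Θ R : Type*} [Fintype Θ] [Fintype R]
    (s : Θ → R → ℝ) (hs : IsMech s)
    (leΘ : Θ → Θ → Prop) (leR : R → R → Prop)
    (hΘ : IsLinearOrder Θ leΘ) (hR : IsLinearOrder R leR)
    (hmono : MonoMech s leΘ leR) :
    ¬ ∃ (r₁ r₂ r₃ : R) (θ₁ θ₂ θ₃ θ₄ : Θ),
        r₁ ≠ r₂ ∧ r₁ ≠ r₃ ∧ r₂ ≠ r₃ ∧
        θ₁ ≠ θ₂ ∧ θ₁ ≠ θ₃ ∧ θ₁ ≠ θ₄ ∧ θ₂ ≠ θ₃ ∧ θ₂ ≠ θ₄ ∧ θ₃ ≠ θ₄ ∧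
        0 < s θ₁ r₁ ∧ 0 < s θ₂ r₂ ∧ 0 < s θ₃ r₃ ∧
        0 < s θ₄ r₁ ∧ 0 < s θ₄ r₂ ∧ 0 < s θ₄ r₃ := by

  rintro ⟨r₁, r₂, r₃, θ₁, θ₂, θ₃, θ₄, h12, h13, h23, _, _, ne14, _, ne24, ne34,
    hp1, hp2, hp3, hq1, hq2, hq3⟩
  have antis : ∀ a b, leR a b → leR b a → a = b := fun a b h h' =>
    hR.toIsPartialOrder.toAntisymm.antisymm a b h h'
  have antisΘ : ∀ a b, leΘ a b → leΘ b a → a = b := fun a b h h' =>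
    hΘ.toIsPartialOrder.toAntisymm.antisymm a b h h'
  have key : ∀ (r : R) (θ : Θ), θ ≠ θ₄ → 0 < s θ r →
      (leR r₁ r ∧ leR r₂ r ∧ leR r₃ r) ∨ (leR r r₁ ∧ leR r r₂ ∧ leR r r₃) := by
    intro r θ hne hr
    by_cases h : leΘ θ θ₄
    · have h4 : ¬ leΘ θ₄ θ := fun h' => hne (antisΘ _ _ h h')
      exact Or.inr ⟨hmono θ₄ θ h4 r₁ r hq1 hr, hmono θ₄ θ h4 r₂ r hq2 hr,
        hmono θ₄ θ h4 r₃ r hq3 hr⟩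
    · exact Or.inl ⟨hmono θ θ₄ h r r₁ hr hq1, hmono θ θ₄ h r r₂ hr hq2,
        hmono θ θ₄ h r r₃ hr hq3⟩
  rcases key r₁ θ₁ ne14 hp1 with h1 | h1 <;> rcases key r₂ θ₂ ne24 hp2 with h2 | h2 <;>
    rcases key r₃ θ₃ ne34 hp3 with h3 | h3
  · exact h12 (antis _ _ h2.1 h1.2.1)
  · exact h12 (antis _ _ h2.1 h1.2.1)
  · exact h13 (antis _ _ h3.1 h1.2.2)
  · exact h23 (antis _ _ h2.2.2 h3.2.1)
  · exact h23 (antis _ _ h3.2.1 h2.2.2)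
  · exact h13 (antis _ _ h1.2.2 h3.1)
  · exact h12 (antis _ _ h1.2.1 h2.1)
  · exact h12 (antis _ _ h1.2.1 h2.1)
end

section
/- Let Θ and R be finite sets and s : Θ → Δ(R). If s is monotone with respect to some linear orders on Θ and R, then s has no Type (2) forbidden triple: there do not exist three distinct states θ₁,θ₂,θ₃ ∈ Θ and four distinct actions r₁,r₂,r₃,r₄ ∈ R such that {r_k, r₄} ⊆ supp(s(θ_k)) for k = 1,2,3. -/
/-!
Order the three states so that θₐ ≻ θ_b ≻ θ_c. Monotonicity squeezes every action in the
support of the middle state between r₄ (in the support of θₐ) and r₄ (in the support of θ_c),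
so the middle state's own action r_b equals r₄, contradicting distinctness.
-/

section LinearOrderRel

variable {α : Type*} {le : α → α → Prop} [IsLinearOrder α le]

theorem not_rel_or_not_rel_of_ne {a b : α} (hab : a ≠ b) : ¬ le a b ∨ ¬ le b a := by
  rcases total_of le a b with h | h
  · exact Or.inr fun h' => hab (antisymm h h')
  · exact Or.inl fun h' => hab (antisymm h' h)

theorem rel_of_not_rel {a b : α} (h : ¬ le a b) : le b a :=
  (total_of le a b).resolve_left h

theorem exists_strictly_between_of_pairwise_ne {x y z : α}
    (hxy : x ≠ y) (hxz : x ≠ z) (hyz : y ≠ z) :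
    ∃ a ∈ ({x, y, z} : Set α), ∃ b ∈ ({x, y, z} : Set α), ∃ c ∈ ({x, y, z} : Set α),
      ¬ le a b ∧ ¬ le b c := by
  rcases not_rel_or_not_rel_of_ne (le := le) hxy with gxy | gyx <;>
    rcases not_rel_or_not_rel_of_ne (le := le) hxz with gxz | gzx <;>
    rcases not_rel_or_not_rel_of_ne (le := le) hyz with gyz | gzy
  · exact ⟨x, by simp, y, by simp, z, by simp, gxy, gyz⟩
  · exact ⟨x, by simp, z, by simp, y, by simp, gxz, gzy⟩
  · exact absurd (trans_of le (rel_of_not_rel gxy) (rel_of_not_rel gzx)) gyz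
  · exact ⟨z, by simp, x, by simp, y, by simp, gzx, gxy⟩
  · exact ⟨y, by simp, x, by simp, z, by simp, gyx, gxz⟩
  · exact absurd (trans_of le (rel_of_not_rel gxz) (rel_of_not_rel gyx)) gzy
  · exact ⟨y, by simp, z, by simp, x, by simp, gyz, gzx⟩
  · exact ⟨z, by simp, y, by simp, x, by simp, gzy, gyx⟩

end LinearOrderRel

theorem MonoMech.eq_of_strictly_between {Θ R : Type*} {s : Θ → R → ℝ}
    {leΘ : Θ → Θ → Prop} {leR : R → R → Prop} [Std.Antisymm leR]
    (hmono : MonoMech s leΘ leR) {a b c : Θ} {r r' : R}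
    (hab : ¬ leΘ a b) (hbc : ¬ leΘ b c) (ha : 0 < s a r) (hb : 0 < s b r') (hc : 0 < s c r) :
    r' = r :=
  antisymm (hmono a b hab r r' ha hb) (hmono b c hbc r' r hb hc)

theorem stmt8_general {Θ R : Type*}
    (s : Θ → R → ℝ)
    (leΘ : Θ → Θ → Prop) (leR : R → R → Prop)
    (hΘ : IsLinearOrder Θ leΘ) (hR : IsLinearOrder R leR)
    (hmono : MonoMech s leΘ leR) :
    ¬ ∃ (θ₁ θ₂ θ₃ : Θ) (r₁ r₂ r₃ r₄ : R),
        θ₁ ≠ θ₂ ∧ θ₁ ≠ θ₃ ∧ θ₂ ≠ θ₃ ∧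
        r₁ ≠ r₂ ∧ r₁ ≠ r₃ ∧ r₁ ≠ r₄ ∧ r₂ ≠ r₃ ∧ r₂ ≠ r₄ ∧ r₃ ≠ r₄ ∧
        0 < s θ₁ r₁ ∧ 0 < s θ₁ r₄ ∧
        0 < s θ₂ r₂ ∧ 0 < s θ₂ r₄ ∧
        0 < s θ₃ r₃ ∧ 0 < s θ₃ r₄ := by
  rintro ⟨θ₁, θ₂, θ₃, r₁, r₂, r₃, r₄, h12, h13, h23, -, -, h14, -, h24, h34,
    p11, p14, p22, p24, p33, p34⟩
  have hr₄ : ∀ θ ∈ ({θ₁, θ₂, θ₃} : Set Θ), 0 < s θ r₄ := by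
    rintro θ (rfl | rfl | rfl) <;> assumption
  obtain ⟨a, ha, b, hb, c, hc, hab, hbc⟩ :=
    exists_strictly_between_of_pairwise_ne (le := leΘ) h12 h13 h23
  have middle : ∀ {r}, 0 < s b r → r = r₄ := fun hr =>
    hmono.eq_of_strictly_between hab hbc (hr₄ a ha) hr (hr₄ c hc)
  rcases hb with rfl | rfl | rfl
  · exact h14 (middle p11)
  · exact h24 (middle p22)
  · exact h34 (middle p33)

/-- A monotone mechanism has no Type (2) forbidden triple. -/
theorem stmt8 {Θ R : Type*} [Fintype Θ] [Fintype R]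
    (s : Θ → R → ℝ) (hs : IsMech s)
    (leΘ : Θ → Θ → Prop) (leR : R → R → Prop)
    (hΘ : IsLinearOrder Θ leΘ) (hR : IsLinearOrder R leR)
    (hmono : MonoMech s leΘ leR) :
    ¬ ∃ (θ₁ θ₂ θ₃ : Θ) (r₁ r₂ r₃ r₄ : R),
        θ₁ ≠ θ₂ ∧ θ₁ ≠ θ₃ ∧ θ₂ ≠ θ₃ ∧
        r₁ ≠ r₂ ∧ r₁ ≠ r₃ ∧ r₁ ≠ r₄ ∧ r₂ ≠ r₃ ∧ r₂ ≠ r₄ ∧ r₃ ≠ r₄ ∧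
        0 < s θ₁ r₁ ∧ 0 < s θ₁ r₄ ∧
        0 < s θ₂ r₂ ∧ 0 < s θ₂ r₄ ∧
        0 < s θ₃ r₃ ∧ 0 < s θ₃ r₄ :=
  stmt8_general s leΘ leR hΘ hR hmono
end

section
/- Let X, Y be finite totally ordered sets and u : X × Y → ℝ strictly supermodular. Then for any probability distributions ρ ∈ Δ(X) and φ ∈ Δ(Y), any solution γ of the optimal transport problem max ∑ u dγ subject to marginals (ρ, φ) has co-monotone support: (x,y),(x',y') ∈ supp(γ) and x > x' imply y ≥ y'. -/
/-! If `γ` charges `(a, b)` and `(c, d)` with `c < a` and `b < d`, moving mass `ε` from these two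
points to `(a, d)` and `(c, b)` keeps both marginals and, by strict supermodularity, strictly
increases `∑ u dγ`; so an optimal plan cannot have such a pair in its support. -/

open Finset

section SwapDirection

variable {X Y : Type*} [DecidableEq X] [DecidableEq Y]

/-- The direction `(𝟙_a - 𝟙_c) ⊗ (𝟙_d - 𝟙_b)`: mass moves from `(a, b)` and `(c, d)` to
`(a, d)` and `(c, b)`. -/
def swapDir (a c : X) (b d : Y) (p : X × Y) : ℝ :=
  (Pi.single a 1 - Pi.single c 1 : X → ℝ) p.1 * (Pi.single d 1 - Pi.single b 1 : Y → ℝ) p.2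

lemma sum_single_sub_single {Z : Type*} [Fintype Z] [DecidableEq Z] (z z' : Z) :
    ∑ i, (Pi.single z 1 - Pi.single z' 1 : Z → ℝ) i = 0 := by
  simp

lemma sum_swapDir_fst [Fintype Y] (a c : X) (b d : Y) (x : X) :
    ∑ y, swapDir a c b d (x, y) = 0 := by
  simp only [swapDir, ← mul_sum, sum_single_sub_single, mul_zero]

lemma sum_swapDir_snd [Fintype X] (a c : X) (b d : Y) (y : Y) :
    ∑ x, swapDir a c b d (x, y) = 0 := by
  simp only [swapDir, ← sum_mul, sum_single_sub_single, zero_mul]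

lemma sum_swapDir [Fintype X] [Fintype Y] (a c : X) (b d : Y) : ∑ p, swapDir a c b d p = 0 := by
  simp only [Fintype.sum_prod_type, sum_swapDir_fst, sum_const_zero]

lemma sum_mul_swapDir [Fintype X] [Fintype Y] (f : X × Y → ℝ) (a c : X) (b d : Y) :
    ∑ p, f p * swapDir a c b d p = f (a, d) + f (c, b) - f (a, b) - f (c, d) := by
  simp only [swapDir, Fintype.sum_prod_type, Pi.sub_apply, Pi.single_apply, mul_sub, mul_ite,
    mul_one, mul_zero, sum_sub_distrib, sum_ite_eq', mem_univ, if_true]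
  ring

lemma neg_one_le_swapDir (a c : X) (b d : Y) (p : X × Y) : -1 ≤ swapDir a c b d p := by
  simp only [swapDir, Pi.sub_apply, Pi.single_apply]
  split_ifs <;> norm_num

variable {γ : X × Y → ℝ} {a c : X} {b d : Y} {ε : ℝ}

lemma swapDir_nonneg {p : X × Y} (hpab : p ≠ (a, b)) (hpcd : p ≠ (c, d)) :
    0 ≤ swapDir a c b d p := by
  obtain ⟨x, y⟩ := p
  simp only [swapDir, Pi.sub_apply, Pi.single_apply]
  split_ifs <;> simp_all

lemma add_mul_swapDir_nonneg (hγ : ∀ p, 0 ≤ γ p) (hε : 0 ≤ ε) (hab : ε ≤ γ (a, b))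
    (hcd : ε ≤ γ (c, d)) (p : X × Y) : 0 ≤ γ p + ε * swapDir a c b d p := by
  have hδ := neg_one_le_swapDir a c b d p
  by_cases hpab : p = (a, b)
  · subst hpab; nlinarith
  by_cases hpcd : p = (c, d)
  · subst hpcd; nlinarith
  nlinarith [hγ p, swapDir_nonneg hpab hpcd]

lemma isDist_add_mul_swapDir [Fintype X] [Fintype Y] (hγ : IsDist γ) (hε : 0 ≤ ε)
    (hab : ε ≤ γ (a, b)) (hcd : ε ≤ γ (c, d)) :
    IsDist fun p => γ p + ε * swapDir a c b d p := by
  refine ⟨add_mul_swapDir_nonneg hγ.1 hε hab hcd, ?_⟩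
  rw [sum_add_distrib, ← mul_sum, sum_swapDir, mul_zero, add_zero, hγ.2]

lemma sum_add_mul_swapDir_fst [Fintype Y] (x : X) :
    ∑ y, (γ (x, y) + ε * swapDir a c b d (x, y)) = ∑ y, γ (x, y) := by
  rw [sum_add_distrib, ← mul_sum, sum_swapDir_fst, mul_zero, add_zero]

lemma sum_add_mul_swapDir_snd [Fintype X] (y : Y) :
    ∑ x, (γ (x, y) + ε * swapDir a c b d (x, y)) = ∑ x, γ (x, y) := by
  rw [sum_add_distrib, ← mul_sum, sum_swapDir_snd, mul_zero, add_zero]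

lemma sum_mul_add_mul_swapDir [Fintype X] [Fintype Y] (f : X × Y → ℝ) :
    ∑ p, f p * (γ p + ε * swapDir a c b d p) =
      ∑ p, f p * γ p + ε * (f (a, d) + f (c, b) - f (a, b) - f (c, d)) := by
  simp only [mul_add, sum_add_distrib, mul_left_comm (f _) ε, ← mul_sum, sum_mul_swapDir]

end SwapDirection

theorem stmt17_general {X Y : Type*} [Fintype X] [Fintype Y] [LinearOrder X] [LinearOrder Y]
    (u : X → Y → ℝ) (hu : StrictSupermod u)
    (ρ : X → ℝ) (φ : Y → ℝ)
    (γ : X × Y → ℝ) (hγ : IsDist γ)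
    (hmx : ∀ x, ∑ y, γ (x, y) = ρ x) (hmy : ∀ y, ∑ x, γ (x, y) = φ y)
    (hopt : ∀ γ' : X × Y → ℝ, IsDist γ' →
      (∀ x, ∑ y, γ' (x, y) = ρ x) → (∀ y, ∑ x, γ' (x, y) = φ y) →
      ∑ p : X × Y, u p.1 p.2 * γ' p ≤ ∑ p : X × Y, u p.1 p.2 * γ p) :
    CoMono {p : X × Y | 0 < γ p} := by
  rintro ⟨a, b⟩ (hab : 0 < γ (a, b)) ⟨c, d⟩ (hcd : 0 < γ (c, d)) (hca : c < a)
  by_contra! hbd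
  set ε := min (γ (a, b)) (γ (c, d))
  have hε : 0 < ε := lt_min hab hcd
  have hle := hopt (fun p => γ p + ε * swapDir a c b d p)
    (isDist_add_mul_swapDir hγ hε.le (min_le_left _ _) (min_le_right _ _))
    (fun x => by rw [sum_add_mul_swapDir_fst, hmx])
    (fun y => by rw [sum_add_mul_swapDir_snd, hmy])
  rw [sum_mul_add_mul_swapDir] at hle
  have hgain : 0 < u a d + u c b - u a b - u c d := by linarith [hu a c d b hca hbd]
  exact hle.not_gt (lt_add_of_pos_right _ (mul_pos hε hgain))

/-- For strictly supermodular u, any solution of the optimal transport problem with marginals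
(ρ, φ) has co-monotone support. -/
theorem stmt17 {X Y : Type*} [Fintype X] [Fintype Y] [LinearOrder X] [LinearOrder Y]
    (u : X → Y → ℝ) (hu : StrictSupermod u)
    (ρ : X → ℝ) (φ : Y → ℝ) (hρ : IsDist ρ) (hφ : IsDist φ)
    (γ : X × Y → ℝ) (hγ : IsDist γ)
    (hmx : ∀ x, ∑ y, γ (x, y) = ρ x) (hmy : ∀ y, ∑ x, γ (x, y) = φ y)
    (hopt : ∀ γ' : X × Y → ℝ, IsDist γ' →
      (∀ x, ∑ y, γ' (x, y) = ρ x) → (∀ y, ∑ x, γ' (x, y) = φ y) →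
      ∑ p : X × Y, u p.1 p.2 * γ' p ≤ ∑ p : X × Y, u p.1 p.2 * γ p) :
    CoMono {p : X × Y | 0 < γ p} :=
  stmt17_general u hu ρ φ γ hγ hmx hmy hopt
end
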